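/- Let Γ be a finite graph with vertex set V such that there exist a vertex σ ∈ V and a σ-projection on Γ. Then Γ is dismantlable. -/

import Mathlib

open SimpleGraph

variable {V : Type*}

/-- The closed neighbourhood of a vertex: the vertex together with all its neighbours. -/
def closedNbhd (G : SimpleGraph V) (ρ : V) : Set V := insert ρ {w | G.Adj ρ w}

/-- `ρ` is dominated by `π` within the subgraph of `G` induced on `S`:
`π ∈ S`, `π ≠ ρ`, and `N(ρ) ∩ S ⊆ N(π)`. -/
def DominatedIn (G : SimpleGraph V) (S : Set V) (ρ π : V) : Prop :=
  π ∈ S ∧ π ≠ ρ ∧ ∀ w ∈ S, w ∈ closedNbhd G ρ → w ∈ closedNbhd G π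

/-- The subgraph of `G` induced on `S` is dismantlable: the vertices of `S` can be
arranged in a (finite) list such that each vertex except the last is dominated in the
subgraph induced on it and the later vertices. -/
def DismantlableOn (G : SimpleGraph V) (S : Set V) : Prop :=
  ∃ l : List V, l.Nodup ∧ (∀ v, v ∈ l ↔ v ∈ S) ∧
    ∀ (i : ℕ) (h : i < l.length), i < l.length - 1 →
      ∃ π, DominatedIn G {w | w ∈ l.drop i} (l[i]'h) π

/-- A graph is dismantlable if the subgraph induced on all of its vertices is. -/
def Dismantlable (G : SimpleGraph V) : Prop := DismantlableOn G Set.univ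

/-- The set `Π*(ρ)` of all vertices appearing in pairs of `Π ρ`. -/
def PiStar (Pr : V → Finset (Sym2 V)) (ρ : V) : Set V := {v | ∃ p ∈ Pr ρ, v ∈ p}

/-- `Pr` is a `σ`-projection: it assigns to each vertex `ρ ≠ σ` a nonempty finite set of
unordered pairs of vertices such that (i) every finite set `R` containing a vertex other
than `σ` has an exposed vertex, and (ii) there is no cycle `ρ₀, …, ρ_{m-1}` with
`ρ_{i+1} ∈ Π*(ρ_i)` (indices mod `m`). -/
structure IsSigmaProjection (G : SimpleGraph V) (σ : V) (Pr : V → Finset (Sym2 V)) : Prop where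
  nonempty : ∀ ρ, ρ ≠ σ → (Pr ρ).Nonempty
  exposed : ∀ R : Finset V, (∃ ρ ∈ R, ρ ≠ σ) →
    ∃ ρ ∈ R, ρ ≠ σ ∧ ∃ p ∈ Pr ρ, ∀ π ∈ p,
      ∀ w ∈ R, w ∈ closedNbhd G ρ → w ∈ closedNbhd G π
  acyclic : ¬ ∃ m : ℕ, 0 < m ∧ ∃ f : ZMod m → V,
    ∀ i, f i ≠ σ ∧ f (i + 1) ∈ PiStar Pr (f i)

/-- `R` is `Π`-convex: for every `ρ ∈ R` other than `σ`, each pair in `Π ρ` meets `R`. -/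
def PiConvex (σ : V) (Pr : V → Finset (Sym2 V)) (R : Set V) : Prop :=
  ∀ ρ ∈ R, ρ ≠ σ → ∀ p ∈ Pr ρ, ∃ v ∈ p, v ∈ R

/-- The orbit `HR` of a set `R` under a group action. -/
def orbitSet (H : Type*) [Group H] [MulAction H V] (R : Set V) : Set V :=
  {x | ∃ h : H, ∃ ρ ∈ R, x = h • ρ}

/-- The geometric realization of the flag complex of `G` inside `ℝ^V`: the union over
all (nonempty) cliques of the convex hulls of the corresponding standard basis vectors. -/
def flagRealization [DecidableEq V] (G : SimpleGraph V) : Set (V → ℝ) :=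
  ⋃ (Δ : Set V) (_ : Δ.Nonempty) (_ : G.IsClique Δ),
    convexHull ℝ ((fun v => (Pi.single v 1 : V → ℝ)) '' Δ)

/-- A walk is a geodesic if its length equals the distance between its endpoints. -/
def IsGeodesic (G : SimpleGraph V) {u v : V} (p : G.Walk u v) : Prop :=
  p.length = G.dist u v

/-- `G` is `δ`-hyperbolic: for any geodesic triangle, each vertex on one side is within
distance `δ` of some vertex on the union of the other two sides. -/
def Hyperbolic (G : SimpleGraph V) (δ : ℕ) : Prop :=
  ∀ (u v w : V) (p : G.Walk u v) (q : G.Walk v w) (r : G.Walk w u),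
    IsGeodesic G p → IsGeodesic G q → IsGeodesic G r →
    ∀ t ∈ p.support, ∃ s, (s ∈ q.support ∨ s ∈ r.support) ∧ G.dist t s ≤ δ

/-- The Rips graph `Γ_D`: same vertices, two distinct vertices adjacent iff their
graph distance in `G` is at most `D`. -/
def ripsGraph (G : SimpleGraph V) (D : ℕ) : SimpleGraph V where
  Adj u v := u ≠ v ∧ G.dist u v ≤ D
  symm := by
    constructor
    intro u v h
    exact ⟨h.1.symm, by rw [SimpleGraph.dist_comm]; exact h.2⟩
  loopless := by
    constructor
    intro v h
    exact h.1 rfl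

/-- The ball of radius `r` around a set `C` of vertices. -/
def ballSet (G : SimpleGraph V) (C : Set V) (r : ℕ) : Set V :=
  {v | ∃ c ∈ C, G.dist v c ≤ r}

/-!
Repeatedly remove an exposed vertex `ρ ≠ σ` of the remaining set `R`. To see that `ρ` is
dominated in `R` even though the vertices of its pair may already be gone, keep the invariant
that every vertex `v` is absorbed by some `u ∈ R` reachable from `v` along `Π*`-edges, in the
sense that `N(v) ∩ R ⊆ N(u)`. If `π` lies in the pair exposing `ρ` and `u` absorbs `π`, then
`N(ρ) ∩ R ⊆ N(π) ∩ R ⊆ N(u)`, and `u ≠ ρ` because `ρ → π →* u` would otherwise be a cycle.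
After removing `ρ`, vertices absorbed by `ρ` are absorbed by `u` instead.
-/

open Relation

theorem Relation.TransGen.exists_fin_path {α : Type*} {r : α → α → Prop} {a b : α}
    (h : TransGen r a b) : ∃ n, ∃ g : Fin (n + 2) → α,
      g 0 = a ∧ g (Fin.last _) = b ∧ ∀ i : Fin (n + 1), r (g i.castSucc) (g i.succ) := by
  induction h using TransGen.head_induction_on with
  | single hab => exact ⟨0, ![_, _], rfl, rfl, fun i => by fin_cases i; exact hab⟩
  | head hab _ ih =>
    obtain ⟨n, g, hg0, hglast, hg⟩ := ih
    refine ⟨n + 1, Fin.cons _ g, rfl, by simpa using hglast, Fin.cases ?_ fun j => ?_⟩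
    · simpa [hg0] using hab
    · simpa using hg j

theorem Relation.TransGen.exists_zmod_cycle {α : Type*} {r : α → α → Prop} {a : α}
    (h : TransGen r a a) : ∃ m, 0 < m ∧ ∃ f : ZMod m → α, ∀ i, r (f i) (f (i + 1)) := by
  suffices ∃ n, ∃ f : Fin (n + 1) → α, ∀ i, r (f i) (f (i + 1)) by
    obtain ⟨n, f, hf⟩ := this
    exact ⟨n + 1, n.succ_pos, f, hf⟩
  obtain ⟨n, g, hg0, hglast, hg⟩ := h.exists_fin_path
  refine ⟨n, fun i => g i.castSucc, fun i => ?_⟩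
  induction i using Fin.lastCases with
  | last =>
    dsimp only
    rw [Fin.last_add_one, Fin.castSucc_zero, hg0, ← hglast]
    exact hg (Fin.last n)
  | cast j =>
    dsimp only
    rw [Fin.coeSucc_eq_succ, ← Fin.succ_castSucc]
    exact hg j.castSucc

section Dismantling

variable {G : SimpleGraph V}

theorem dismantlableOn_of_subsingleton {S : Set V} (hS : S.Subsingleton) :
    DismantlableOn G S := by
  rcases hS.eq_empty_or_singleton with rfl | ⟨a, rfl⟩
  · exact ⟨[], List.nodup_nil, by simp, by simp⟩
  · exact ⟨[a], List.nodup_singleton a, by simp, by simp⟩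

theorem DismantlableOn.of_diff_singleton {S : Set V} {ρ π : V} (hρ : ρ ∈ S)
    (hdom : DominatedIn G S ρ π) (h : DismantlableOn G (S \ {ρ})) : DismantlableOn G S := by
  obtain ⟨l, hnd, hmem, hl⟩ := h
  have hS : {w | w ∈ ρ :: l} = S := by
    ext w
    by_cases hw : w = ρ <;> simp [hmem, hw, hρ]
  refine ⟨ρ :: l, List.nodup_cons.2 ⟨by simp [hmem], hnd⟩, fun v => by rw [← hS]; rfl, ?_⟩
  rintro (_ | i) hi hi'
  · refine ⟨π, ?_⟩
    rw [List.drop_zero, hS]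
    exact hdom
  · exact hl i _ (by simp only [List.length_cons] at hi'; omega)

def AbsorbsAll (G : SimpleGraph V) (r : V → V → Prop) (R : Finset V) : Prop :=
  ∀ v, ∃ u ∈ R, ReflTransGen r v u ∧ ∀ w ∈ R, w ∈ closedNbhd G v → w ∈ closedNbhd G u

theorem AbsorbsAll.erase [DecidableEq V] {r : V → V → Prop} {R : Finset V}
    (hR : AbsorbsAll G r R) {ρ u : V} (hdom : DominatedIn G R ρ u) (hρu : ReflTransGen r ρ u) :
    AbsorbsAll G r (R.erase ρ) := by
  intro v
  obtain ⟨x, hxR, hvx, hx⟩ := hR v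
  by_cases hxρ : x = ρ
  · subst hxρ
    refine ⟨u, Finset.mem_erase.2 ⟨hdom.2.1, hdom.1⟩, hvx.trans hρu, fun w hw hwv => ?_⟩
    have hwR := Finset.mem_of_mem_erase hw
    exact hdom.2.2 w hwR (hx w hwR hwv)
  · refine ⟨x, Finset.mem_erase.2 ⟨hxρ, hxR⟩, hvx, fun w hw => ?_⟩
    exact hx w (Finset.mem_of_mem_erase hw)

end Dismantling

section SigmaProjection

variable {G : SimpleGraph V} {σ : V} {Pr : V → Finset (Sym2 V)}

def ProjEdge (σ : V) (Pr : V → Finset (Sym2 V)) (ρ π : V) : Prop :=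
  ρ ≠ σ ∧ π ∈ PiStar Pr ρ

theorem IsSigmaProjection.not_transGen_projEdge (hPr : IsSigmaProjection G σ Pr) (ρ : V) :
    ¬ TransGen (ProjEdge σ Pr) ρ ρ := fun h => hPr.acyclic h.exists_zmod_cycle

theorem IsSigmaProjection.exists_dominatedIn (hPr : IsSigmaProjection G σ Pr) {R : Finset V}
    (hR : AbsorbsAll G (ProjEdge σ Pr) R) (hσ : ∃ ρ ∈ R, ρ ≠ σ) :
    ∃ ρ ∈ R, ∃ u, DominatedIn G R ρ u ∧ ReflTransGen (ProjEdge σ Pr) ρ u := by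
  obtain ⟨ρ, hρR, hρσ, p, hp, hexp⟩ := hPr.exposed R hσ
  have hρπ : ProjEdge σ Pr ρ p.out.1 := ⟨hρσ, p, hp, p.out_fst_mem⟩
  obtain ⟨u, huR, hπu, hdom⟩ := hR p.out.1
  have hne : u ≠ ρ := by
    rintro rfl
    exact hPr.not_transGen_projEdge u (.head' hρπ hπu)
  refine ⟨ρ, hρR, u, ⟨huR, hne, fun w hw hwρ => ?_⟩, .head hρπ hπu⟩
  exact hdom w hw (hexp _ p.out_fst_mem w hw hwρ)

theorem IsSigmaProjection.dismantlableOn_of_absorbsAll (hPr : IsSigmaProjection G σ Pr)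
    (R : Finset V) (hR : AbsorbsAll G (ProjEdge σ Pr) R) : DismantlableOn G R := by
  classical
  induction R using Finset.strongInduction with
  | H R ih =>
  by_cases hσ : ∃ ρ ∈ R, ρ ≠ σ
  · obtain ⟨ρ, hρR, u, hdom, hρu⟩ := hPr.exists_dominatedIn hR hσ
    refine .of_diff_singleton hρR hdom ?_
    rw [← Finset.coe_erase]
    exact ih _ (Finset.erase_ssubset hρR) (hR.erase hdom hρu)
  · push Not at hσ
    exact dismantlableOn_of_subsingleton (Set.subsingleton_of_forall_eq σ hσ)

end SigmaProjection

theorem dismantlable_of_sigmaProjection {V : Type*} [Fintype V] (G : SimpleGraph V)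
    (σ : V) (Pr : V → Finset (Sym2 V)) (hPr : IsSigmaProjection G σ Pr) :
    Dismantlable G := by
  have := hPr.dismantlableOn_of_absorbsAll Finset.univ
    fun v => ⟨v, Finset.mem_univ v, .refl, fun _ _ => id⟩
  rwa [Finset.coe_univ] at this
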